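/- Let (Xₙ) be a nonnegative martingale with E[Xₙ] = 1 for all n, and let Lₙ be the Lorenz curve of Xₙ. Then for each u ∈ [0,1], the sequence Lₙ(u) is nonincreasing in n. -/

import Mathlib

/-!
Pushing Lebesgue measure on `(0, 1)` forward by the quantile function `G` of `X` gives the law
of `X`. Since `G` is monotone, integrating `G ≥ x - (x - G)⁺` over `(0, u)` shows
`u x - E (x - X)⁺ ≤ L(u)` for every `x`, with equality at `x = G(u)` when `0 < u < 1`.
By conditional Jensen, `E (x - X)⁺` can only grow along a martingale, so `L(u)` can only shrink;
at `u = 1` both sides are the mean, which the martingale preserves.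
-/

open MeasureTheory ProbabilityTheory
open scoped ProbabilityTheory

/-- Cumulative distribution function of a random variable `X`. -/
noncomputable def cdfOf {Ω : Type*} [MeasureSpace Ω] (X : Ω → ℝ) (x : ℝ) : ℝ :=
  (ℙ {ω | X ω ≤ x}).toReal

/-- Generalized inverse (quantile function) of a CDF `F`:
`F⁻¹(u) = inf {x : F x ≥ u}`. -/
noncomputable def quantile (F : ℝ → ℝ) (u : ℝ) : ℝ :=
  sInf {x : ℝ | u ≤ F x}

/-- Lorenz curve of a random variable `X`: `L(u) = ∫₀ᵘ F⁻¹(τ) dτ`. -/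
noncomputable def lorenz {Ω : Type*} [MeasureSpace Ω] (X : Ω → ℝ) (u : ℝ) : ℝ :=
  ∫ τ in (0:ℝ)..u, quantile (cdfOf X) τ

open Set

section Quantile

variable (μ : Measure ℝ)

theorem quantile_cdf_le_iff {u : ℝ} (hu : u ∈ Ioo 0 1) (s : ℝ) :
    quantile (cdf μ) u ≤ s ↔ u ≤ cdf μ s := by
  have hne : {x | u ≤ cdf μ x}.Nonempty :=
    ((tendsto_cdf_atTop μ).eventually_const_le hu.2).exists
  obtain ⟨b, hb⟩ := ((tendsto_cdf_atBot μ).eventually_lt_const hu.1).exists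
  have hbdd : BddBelow {x | u ≤ cdf μ x} :=
    ⟨b, fun x hx => ((monotone_cdf μ).reflect_lt (hb.trans_le hx)).le⟩
  refine ⟨fun h => ?_, fun h => csInf_le hbdd h⟩
  have hright : ∀ y > quantile (cdf μ) u, u ≤ cdf μ y := fun y hy => by
    obtain ⟨z, hz, hzy⟩ := exists_lt_of_csInf_lt hne hy
    exact hz.trans (monotone_cdf μ hzy.le)
  -- right-continuity of the cdf puts the infimum itself in the set
  have hq : u ≤ cdf μ (quantile (cdf μ) u) :=
    ge_of_tendsto (((cdf μ).right_continuous _).mono Ioi_subset_Ici_self)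
      (eventually_nhdsWithin_of_forall hright)
  exact hq.trans (monotone_cdf μ h)

theorem monotoneOn_quantile_cdf : MonotoneOn (quantile (cdf μ)) (Ioo 0 1) :=
  fun _ ha _ hb hab =>
    (quantile_cdf_le_iff μ ha _).2 (hab.trans ((quantile_cdf_le_iff μ hb _).1 le_rfl))

theorem aemeasurable_quantile_cdf :
    AEMeasurable (quantile (cdf μ)) (volume.restrict (Ioo 0 1)) :=
  aemeasurable_restrict_of_monotoneOn measurableSet_Ioo (monotoneOn_quantile_cdf μ)

theorem map_quantile_cdf [IsProbabilityMeasure μ] :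
    (volume.restrict (Ioo 0 1)).map (quantile (cdf μ)) = μ := by
  refine (Measure.ext_of_Iic μ _ fun s => ?_).symm
  have hpre : quantile (cdf μ) ⁻¹' Iic s ∩ Ioo 0 1 = Ioo 0 1 ∩ Iic (cdf μ s) := by
    ext τ
    simp only [mem_inter_iff, mem_preimage, mem_Iic]
    exact ⟨fun ⟨h, hτ⟩ => ⟨hτ, (quantile_cdf_le_iff μ hτ s).1 h⟩,
      fun ⟨hτ, h⟩ => ⟨(quantile_cdf_le_iff μ hτ s).2 h, hτ⟩⟩
  rw [Measure.map_apply_of_aemeasurable (aemeasurable_quantile_cdf μ) measurableSet_Iic,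
    Measure.restrict_apply' measurableSet_Ioo, hpre,
    measure_congr (Ioo_ae_eq_Ioc (μ := volume).inter (ae_eq_refl (Iic (cdf μ s)))),
    Ioc_inter_Iic, min_eq_right (cdf_le_one μ s), Real.volume_Ioc, sub_zero, ofReal_cdf]

end Quantile

section Lorenz

variable {Ω : Type*} [MeasureSpace Ω] {X : Ω → ℝ}

theorem lorenz_eq_setIntegral {u : ℝ} (hu : 0 ≤ u) :
    lorenz X u = ∫ τ in Ioo 0 u, quantile (cdfOf X) τ := by
  rw [lorenz, intervalIntegral.integral_of_le hu, integral_Ioc_eq_integral_Ioo]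

variable [IsProbabilityMeasure (ℙ : Measure Ω)]

theorem cdfOf_eq_cdf_map (hX : AEMeasurable X) : cdfOf X = cdf (Measure.map X ℙ) := by
  have := Measure.isProbabilityMeasure_map hX
  ext x
  rw [cdfOf, cdf_eq_real, measureReal_def, Measure.map_apply_of_aemeasurable hX measurableSet_Iic]
  rfl

theorem integral_comp_quantile_cdfOf (hX : AEMeasurable X) {φ : ℝ → ℝ}
    (hφ : AEStronglyMeasurable φ (Measure.map X ℙ)) :
    ∫ τ in Ioo 0 1, φ (quantile (cdfOf X) τ) = ∫ ω, φ (X ω) := by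
  have := Measure.isProbabilityMeasure_map hX
  rw [cdfOf_eq_cdf_map hX, ← integral_map (aemeasurable_quantile_cdf _)
    (by rwa [map_quantile_cdf]), map_quantile_cdf, integral_map hX hφ]

theorem integrableOn_comp_quantile_cdfOf (hX : AEMeasurable X) {φ : ℝ → ℝ}
    (hφ : AEStronglyMeasurable φ (Measure.map X ℙ)) (hφX : Integrable (φ ∘ X)) :
    IntegrableOn (φ ∘ quantile (cdfOf X)) (Ioo 0 1) := by
  have := Measure.isProbabilityMeasure_map hX
  rw [cdfOf_eq_cdf_map hX, IntegrableOn, ← integrable_map_measure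
    (by rwa [map_quantile_cdf]) (aemeasurable_quantile_cdf _), map_quantile_cdf,
    integrable_map_measure hφ hX]
  exact hφX

theorem monotoneOn_quantile_cdfOf (hX : AEMeasurable X) :
    MonotoneOn (quantile (cdfOf X)) (Ioo 0 1) := by
  have := Measure.isProbabilityMeasure_map hX
  rw [cdfOf_eq_cdf_map hX]
  exact monotoneOn_quantile_cdf _

theorem integrableOn_quantile_cdfOf (hX : Integrable X) :
    IntegrableOn (quantile (cdfOf X)) (Ioo 0 1) :=
  integrableOn_comp_quantile_cdfOf hX.aemeasurable aestronglyMeasurable_id hX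

theorem lorenz_one (hX : Integrable X) : lorenz X 1 = ∫ ω, X ω :=
  (lorenz_eq_setIntegral zero_le_one).trans
    (integral_comp_quantile_cdfOf hX.aemeasurable aestronglyMeasurable_id)

theorem lorenz_eq_mul_sub_setIntegral (hX : Integrable X) {u : ℝ} (hu : u ∈ Icc 0 1) (x : ℝ) :
    lorenz X u = u * x - ∫ τ in Ioo 0 u, (x - quantile (cdfOf X) τ) := by
  rw [integral_sub (integrableOn_const (C := x) measure_Ioo_lt_top.ne)
      ((integrableOn_quantile_cdfOf hX).mono_set (Ioo_subset_Ioo_right hu.2)), setIntegral_const,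
    Real.volume_real_Ioo_of_le hu.1, sub_zero, smul_eq_mul, sub_sub_cancel,
    lorenz_eq_setIntegral hu.1]

theorem mul_sub_integral_max_sub_le_lorenz (hX : Integrable X) {u : ℝ} (hu : u ∈ Icc 0 1)
    (x : ℝ) : u * x - ∫ ω, max (x - X ω) 0 ≤ lorenz X u := by
  have hsub : Ioo 0 u ⊆ Ioo 0 1 := Ioo_subset_Ioo_right hu.2
  have hφ : Continuous fun y : ℝ => max (x - y) 0 := by fun_prop
  have hint : IntegrableOn (fun τ => max (x - quantile (cdfOf X) τ) 0) (Ioo 0 1) :=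
    integrableOn_comp_quantile_cdfOf hX.aemeasurable hφ.aestronglyMeasurable
      ((integrable_const x).sub hX).pos_part
  rw [lorenz_eq_mul_sub_setIntegral hX hu x,
    ← integral_comp_quantile_cdfOf hX.aemeasurable hφ.aestronglyMeasurable]
  refine sub_le_sub_left ?_ _
  calc ∫ τ in Ioo 0 u, (x - quantile (cdfOf X) τ)
      ≤ ∫ τ in Ioo 0 u, max (x - quantile (cdfOf X) τ) 0 :=
        integral_mono ((integrableOn_const (C := x) measure_Ioo_lt_top.ne).sub
            ((integrableOn_quantile_cdfOf hX).mono_set hsub))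
          (hint.mono_set hsub) fun τ => le_max_left _ _
    _ ≤ ∫ τ in Ioo 0 1, max (x - quantile (cdfOf X) τ) 0 :=
        setIntegral_mono_set hint (ae_of_all _ fun τ => le_max_right _ _) hsub.eventuallyLE

theorem lorenz_eq_mul_quantile_sub (hX : Integrable X) {u : ℝ} (hu : u ∈ Ioo 0 1) :
    lorenz X u = u * quantile (cdfOf X) u
      - ∫ ω, max (quantile (cdfOf X) u - X ω) 0 := by
  set q := quantile (cdfOf X) u
  have hφ : Continuous fun y : ℝ => max (q - y) 0 := by fun_prop
  have hmono := monotoneOn_quantile_cdfOf hX.aemeasurable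
  rw [lorenz_eq_mul_sub_setIntegral hX (Ioo_subset_Icc_self hu) q,
    ← integral_comp_quantile_cdfOf hX.aemeasurable hφ.aestronglyMeasurable]
  congr 1
  calc ∫ τ in Ioo 0 u, (q - quantile (cdfOf X) τ)
      = ∫ τ in Ioo 0 u, max (q - quantile (cdfOf X) τ) 0 :=
        setIntegral_congr_fun measurableSet_Ioo fun τ hτ => (max_eq_left (sub_nonneg.2
          (hmono ⟨hτ.1, hτ.2.trans hu.2⟩ hu hτ.2.le))).symm
    _ = ∫ τ in Ioo 0 1, max (q - quantile (cdfOf X) τ) 0 :=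
        (setIntegral_eq_of_subset_of_forall_sdiff_eq_zero measurableSet_Ioo
          (Ioo_subset_Ioo_right hu.2.le) fun τ ⟨⟨hτ0, hτ1⟩, hτu⟩ =>
            have huτ : u ≤ τ := not_lt.1 fun h => hτu ⟨hτ0, h⟩
            max_eq_right (sub_nonpos.2 (hmono hu ⟨hu.1.trans_le huτ, hτ1⟩ huτ))).symm

end Lorenz

theorem integral_comp_le_of_condExp_ae_eq {Ω : Type*} {m mΩ : MeasurableSpace Ω}
    {μ : Measure Ω} [IsFiniteMeasure μ] {X Y : Ω → ℝ} {φ : ℝ → ℝ} (hm : m ≤ mΩ)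
    (hφ : ConvexOn ℝ univ φ) (hY : Integrable Y μ) (hφY : Integrable (φ ∘ Y) μ)
    (hφX : Integrable (φ ∘ X) μ) (hXY : μ[Y | m] =ᵐ[μ] X) :
    ∫ ω, φ (X ω) ∂μ ≤ ∫ ω, φ (Y ω) ∂μ :=
  calc ∫ ω, φ (X ω) ∂μ = ∫ ω, φ (μ[Y | m] ω) ∂μ := integral_congr_ae (hXY.fun_comp φ).symm
    _ ≤ ∫ ω, μ[φ ∘ Y | m] ω ∂μ :=
        integral_mono_ae (hφX.congr (hXY.fun_comp φ).symm) integrable_condExp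
          (hφ.map_condExp_le_of_finiteDimensional hm hY hφY)
    _ = ∫ ω, φ (Y ω) ∂μ := integral_condExp hm

theorem convexOn_max_const_sub_zero (c : ℝ) : ConvexOn ℝ univ fun y : ℝ => max (c - y) 0 :=
  ((convexOn_const c convex_univ).sub (concaveOn_id convex_univ)).sup
    (convexOn_const 0 convex_univ)

theorem integral_max_const_sub_le_of_condExp_ae_eq {Ω : Type*} {m mΩ : MeasurableSpace Ω}
    {μ : Measure Ω} [IsFiniteMeasure μ] {X Y : Ω → ℝ} (hm : m ≤ mΩ) (hY : Integrable Y μ)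
    (hXY : μ[Y | m] =ᵐ[μ] X) (c : ℝ) :
    ∫ ω, max (c - X ω) 0 ∂μ ≤ ∫ ω, max (c - Y ω) 0 ∂μ :=
  integral_comp_le_of_condExp_ae_eq hm (convexOn_max_const_sub_zero c) hY
    ((integrable_const c).sub hY).pos_part
    ((integrable_const c).sub (integrable_condExp.congr hXY)).pos_part hXY

theorem lorenz_le_of_condExp_ae_eq {Ω : Type*} [MeasureSpace Ω]
    [IsProbabilityMeasure (ℙ : Measure Ω)] {m : MeasurableSpace Ω} {X Y : Ω → ℝ}
    (hm : m ≤ MeasureSpace.toMeasurableSpace) (hY : Integrable Y) (hXY : ℙ[Y | m] =ᵐ[ℙ] X)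
    {u : ℝ} (hu : u ∈ Icc 0 1) : lorenz Y u ≤ lorenz X u := by
  have hX : Integrable X := (integrable_condExp (μ := ℙ)).congr hXY
  rcases hu.1.eq_or_lt with rfl | hu0
  · simp [lorenz]
  rcases hu.2.eq_or_lt with rfl | hu1
  · rw [lorenz_one hY, lorenz_one hX, ← integral_condExp hm, integral_congr_ae hXY]
  set q := quantile (cdfOf Y) u
  calc lorenz Y u = u * q - ∫ ω, max (q - Y ω) 0 := lorenz_eq_mul_quantile_sub hY ⟨hu0, hu1⟩
    _ ≤ u * q - ∫ ω, max (q - X ω) 0 :=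
        sub_le_sub_left (integral_max_const_sub_le_of_condExp_ae_eq hm hY hXY q) _
    _ ≤ lorenz X u := mul_sub_integral_max_sub_le_lorenz hX hu q

theorem lorenz_nonincreasing_along_martingale_general {Ω : Type*} [MeasureSpace Ω]
    [IsProbabilityMeasure (ℙ : Measure Ω)]
    (X : ℕ → Ω → ℝ) (hm : ∀ n, Measurable (X n))
    (hint : ∀ n, Integrable (X n))
    (hmart : ∀ n, (ℙ : Measure Ω)[X (n + 1) |
        ⨆ j ∈ Finset.range (n + 1), MeasurableSpace.comap (X j) (borel ℝ)]
        =ᵐ[ℙ] X n) :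
    ∀ n, ∀ u ∈ Set.Icc (0:ℝ) 1, lorenz (X (n + 1)) u ≤ lorenz (X n) u := fun n _ hu =>
  lorenz_le_of_condExp_ae_eq
    (iSup₂_le fun j _ => BorelSpace.measurable_eq (α := ℝ) ▸ (hm j).comap_le)
    (hint (n + 1)) (hmart n) hu

/-- Along a nonnegative mean-one martingale, the Lorenz curve is
pointwise nonincreasing in time. -/
theorem lorenz_nonincreasing_along_martingale {Ω : Type*} [MeasureSpace Ω]
    [IsProbabilityMeasure (ℙ : Measure Ω)]
    (X : ℕ → Ω → ℝ) (hm : ∀ n, Measurable (X n))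
    (hint : ∀ n, Integrable (X n))
    (hpos : ∀ n ω, 0 ≤ X n ω) (hmean : ∀ n, ∫ ω, X n ω = 1)
    (hmart : ∀ n, (ℙ : Measure Ω)[X (n + 1) |
        ⨆ j ∈ Finset.range (n + 1), MeasurableSpace.comap (X j) (borel ℝ)]
        =ᵐ[ℙ] X n) :
    ∀ n, ∀ u ∈ Set.Icc (0:ℝ) 1, lorenz (X (n + 1)) u ≤ lorenz (X n) u :=
  lorenz_nonincreasing_along_martingale_general X hm hint hmart
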